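/- Dong's lemma for modules: let V be a module over a Lie algebra g, let a(z), b(z) be formal distributions with coefficients in g and v(z) a formal distribution with coefficients in V. If the pairs (a,b), (a,v), (b,v) are all local (i.e. (z-w)^N[a(z),b(w)]=0, (z-w)^N a(z)v(w)=0, (z-w)^N b(z)v(w)=0 for some N), then for every j ∈ ℤ₊ the pairs (a_{(j)}b, v) and (a, b_{(j)}v) are local. -/
import Mathlib

open Finset

/- Formal distributions with coefficients in a Lie algebra `g`, or in a `g`-module `V`,
are encoded by their coefficient families (`a m` = coefficient of `z^{-m-1}`). -/

variable {g : Type*} [LieRing g] [LieAlgebra ℂ g]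
variable {V : Type*} [AddCommGroup V] [Module ℂ V] [LieRingModule g V]

section Generic

variable {W : Type*} [AddCommGroup W] [Bracket g W]

/-- Coefficient of `w^{-m-1}` in the `j`-th product
`(a_{(j)}y)(w) = Res_z (z-w)^j a(z) y(w)` (brackets understood). -/
def nprod (a : ℤ → g) (y : ℤ → W) (j : ℕ) (m : ℤ) : W :=
  ∑ k ∈ range (j + 1), ((-1 : ℤ) ^ k * (j.choose k : ℤ)) • ⁅a ((j : ℤ) - k), y (m + k)⁆

/-- Locality `(z-w)^N a(z) y(w) = 0` for some `N ∈ ℤ₊`, coefficientwise. -/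
def IsLocal (a : ℤ → g) (y : ℤ → W) : Prop :=
  ∃ N : ℕ, ∀ m n : ℤ, ∑ k ∈ range (N + 1),
    ((-1 : ℤ) ^ k * (N.choose k : ℤ)) • ⁅a (m + N - k), y (n + k)⁆ = 0

end Generic

namespace DongAux

/-! ### Shift operators on three-variable coefficient families -/

variable {M : Type*} [AddCommGroup M]

/-- Shift in the first variable. -/
def sh1 : Module.End ℤ (ℤ → ℤ → ℤ → M) where
  toFun F := fun p q r => F (p+1) q r
  map_add' _ _ := rfl
  map_smul' _ _ := rfl

/-- Shift in the second variable. -/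
def sh2 : Module.End ℤ (ℤ → ℤ → ℤ → M) where
  toFun F := fun p q r => F p (q+1) r
  map_add' _ _ := rfl
  map_smul' _ _ := rfl

/-- Shift in the third variable. -/
def sh3 : Module.End ℤ (ℤ → ℤ → ℤ → M) where
  toFun F := fun p q r => F p q (r+1)
  map_add' _ _ := rfl
  map_smul' _ _ := rfl

lemma sh1_pow (n : ℕ) (F : ℤ → ℤ → ℤ → M) (p q r : ℤ) :
    ((sh1 (M := M))^n) F p q r = F (p + n) q r := by
  induction n generalizing F p with
  | zero => simp
  | succ n ih =>
    rw [pow_succ, Module.End.mul_apply, ih]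
    show F (p + n + 1) q r = _
    congr 1; push_cast; ring

lemma sh2_pow (n : ℕ) (F : ℤ → ℤ → ℤ → M) (p q r : ℤ) :
    ((sh2 (M := M))^n) F p q r = F p (q + n) r := by
  induction n generalizing F q with
  | zero => simp
  | succ n ih =>
    rw [pow_succ, Module.End.mul_apply, ih]
    show F p (q + n + 1) r = _
    congr 1; push_cast; ring

lemma sh3_pow (n : ℕ) (F : ℤ → ℤ → ℤ → M) (p q r : ℤ) :
    ((sh3 (M := M))^n) F p q r = F p q (r + n) := by
  induction n generalizing F r with
  | zero => simp
  | succ n ih =>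
    rw [pow_succ, Module.End.mul_apply, ih]
    show F p q (r + n + 1) = _
    congr 1; push_cast; ring

lemma comm12 : Commute (sh1 : Module.End ℤ (ℤ → ℤ → ℤ → M)) sh2 := rfl
lemma comm13 : Commute (sh1 : Module.End ℤ (ℤ → ℤ → ℤ → M)) sh3 := rfl
lemma comm23 : Commute (sh2 : Module.End ℤ (ℤ → ℤ → ℤ → M)) sh3 := rfl

/-- Binomial formula for `(U-V)^n` with commuting `U`, `V`. -/
lemma sub_pow_comm {R : Type*} [Ring R] {U V : R} (h : Commute U V) (n : ℕ) :
    (U - V)^n = ∑ k ∈ range (n+1), ((-1:ℤ)^k * (n.choose k : ℤ)) • (U^(n-k) * V^k) := by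
  rw [sub_eq_neg_add, Commute.add_pow (h.symm.neg_left)]
  apply Finset.sum_congr rfl
  intro k hk
  rw [neg_pow, zsmul_eq_mul]
  push_cast
  rw [mul_assoc ((-1:R)^k) (V^k) (U^(n-k)), (h.symm.pow_pow k (n-k)).eq]
  rw [mul_assoc, ← (Nat.cast_commute (n.choose k) (U^(n-k) * V^k)).eq, ← mul_assoc]

lemma evalD12 (n : ℕ) (F : ℤ → ℤ → ℤ → M) (p q r : ℤ) :
    (((sh1 - sh2 : Module.End ℤ (ℤ → ℤ → ℤ → M)))^n) F p q r
      = ∑ k ∈ range (n+1), ((-1:ℤ)^k * (n.choose k : ℤ)) • F (p + n - k) (q + k) r := by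
  rw [sub_pow_comm comm12 n]
  simp only [LinearMap.sum_apply, Finset.sum_apply, LinearMap.smul_apply, Pi.smul_apply,
    Module.End.mul_apply]
  apply Finset.sum_congr rfl
  intro k hk
  rw [mem_range] at hk
  rw [sh1_pow, sh2_pow, show p + ((n - k : ℕ) : ℤ) = p + n - k from by omega]

lemma evalD23 (n : ℕ) (F : ℤ → ℤ → ℤ → M) (p q r : ℤ) :
    (((sh2 - sh3 : Module.End ℤ (ℤ → ℤ → ℤ → M)))^n) F p q r
      = ∑ k ∈ range (n+1), ((-1:ℤ)^k * (n.choose k : ℤ)) • F p (q + n - k) (r + k) := by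
  rw [sub_pow_comm comm23 n]
  simp only [LinearMap.sum_apply, Finset.sum_apply, LinearMap.smul_apply, Pi.smul_apply,
    Module.End.mul_apply]
  apply Finset.sum_congr rfl
  intro k hk
  rw [mem_range] at hk
  rw [sh2_pow, sh3_pow, show q + ((n - k : ℕ) : ℤ) = q + n - k from by omega]

lemma evalD13 (n : ℕ) (F : ℤ → ℤ → ℤ → M) (p q r : ℤ) :
    (((sh1 - sh3 : Module.End ℤ (ℤ → ℤ → ℤ → M)))^n) F p q r
      = ∑ k ∈ range (n+1), ((-1:ℤ)^k * (n.choose k : ℤ)) • F (p + n - k) q (r + k) := by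
  rw [sub_pow_comm comm13 n]
  simp only [LinearMap.sum_apply, Finset.sum_apply, LinearMap.smul_apply, Pi.smul_apply,
    Module.End.mul_apply]
  apply Finset.sum_congr rfl
  intro k hk
  rw [mem_range] at hk
  rw [sh1_pow, sh3_pow, show p + ((n - k : ℕ) : ℤ) = p + n - k from by omega]

/-- Raising the order of a vanishing power. -/
lemma raise (L : Module.End ℤ (ℤ → ℤ → ℤ → M)) {n m : ℕ} (F : ℤ → ℤ → ℤ → M)
    (h : (L^n) F = 0) (hnm : n ≤ m) : (L^m) F = 0 := by
  obtain ⟨d, rfl⟩ := Nat.exists_eq_add_of_le hnm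
  rw [add_comm, pow_add, Module.End.mul_apply, h, map_zero]

/-! ### The two integral certificates -/

lemma cert_comm {R : Type*} [CommRing R] (u v : R) (N s : ℕ) :
    ∃ A B : R, u^(3*N) * v^s = A * (u+v)^N + B * (u^N * v^N) := by
  have h2 : ∃ A' B' : R, u^(2*N) = A' * (u+v)^N + B' * v^N := by
    set c := u + v with hc
    have hu : u = c - v := by rw [hc]; ring
    refine ⟨∑ k ∈ Ico N (2*N+1), c^(k-N) * (-v)^(2*N-k) * (2*N).choose k,
           ∑ k ∈ range N, c^k * (-v)^(N-k) * (-1)^N * (2*N).choose k, ?_⟩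
    have expand : u^(2*N) = ∑ k ∈ range (2*N+1), c^k * (-v)^(2*N-k) * (2*N).choose k := by
      rw [hu, sub_eq_add_neg, add_pow]
    have e1 : ∑ k ∈ range N, c^k * (-v)^(2*N-k) * ((2*N).choose k : R)
        = (∑ k ∈ range N, c^k * (-v)^(N-k) * (-1)^N * (2*N).choose k) * v^N := by
      rw [Finset.sum_mul]
      apply Finset.sum_congr rfl
      intro k hk
      rw [mem_range] at hk
      have h1 : (-v)^(2*N-k) = (-v)^(N-k) * (-v)^N := by rw [← pow_add]; congr 1; omega
      have h2 : (-v : R)^N = (-1)^N * v^N := by rw [neg_pow]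
      rw [h1, h2]; ring
    have e2 : ∑ k ∈ Ico N (2*N+1), c^k * (-v)^(2*N-k) * ((2*N).choose k : R)
        = (∑ k ∈ Ico N (2*N+1), c^(k-N) * (-v)^(2*N-k) * (2*N).choose k) * c^N := by
      rw [Finset.sum_mul]
      apply Finset.sum_congr rfl
      intro k hk
      rw [mem_Ico] at hk
      have h1 : c^k = c^(k-N) * c^N := by rw [← pow_add]; congr 1; omega
      rw [h1]; ring
    rw [expand, range_eq_Ico, ← Finset.sum_Ico_consecutive _ (Nat.zero_le N) (by omega),
        ← range_eq_Ico, e1, e2, add_comm]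
  obtain ⟨A', B', h'⟩ := h2
  refine ⟨u^N * v^s * A', B' * v^s, ?_⟩
  have h3 : u^(3*N) = u^N * u^(2*N) := by rw [← pow_add]; congr 1; ring
  rw [h3, h']; ring

lemma cert_comm2 {R : Type*} [CommRing R] (u v : R) (N s : ℕ) :
    ∃ A B : R, u^(3*N) * v^s = A * v^N + B * (u^N * (u-v)^N) := by
  have h2 : ∃ A' B' : R, u^(2*N) = A' * v^N + B' * (u-v)^N := by
    have hu : u = v + (u - v) := by ring
    refine ⟨∑ k ∈ Ico N (2*N+1), v^(k-N) * (u-v)^(2*N-k) * (2*N).choose k,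
           ∑ k ∈ range N, v^k * (u-v)^(N-k) * (2*N).choose k, ?_⟩
    have expand : u^(2*N) = ∑ k ∈ range (2*N+1), v^k * (u-v)^(2*N-k) * (2*N).choose k := by
      conv_lhs => rw [hu]
      rw [add_pow]
    have e1 : ∑ k ∈ range N, v^k * (u-v)^(2*N-k) * ((2*N).choose k : R)
        = (∑ k ∈ range N, v^k * (u-v)^(N-k) * (2*N).choose k) * (u-v)^N := by
      rw [Finset.sum_mul]
      apply Finset.sum_congr rfl
      intro k hk
      rw [mem_range] at hk
      have h1 : (u-v)^(2*N-k) = (u-v)^(N-k) * (u-v)^N := by rw [← pow_add]; congr 1; omega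
      rw [h1]; ring
    have e2 : ∑ k ∈ Ico N (2*N+1), v^k * (u-v)^(2*N-k) * ((2*N).choose k : R)
        = (∑ k ∈ Ico N (2*N+1), v^(k-N) * (u-v)^(2*N-k) * (2*N).choose k) * v^N := by
      rw [Finset.sum_mul]
      apply Finset.sum_congr rfl
      intro k hk
      rw [mem_Ico] at hk
      have h1 : v^k = v^(k-N) * v^N := by rw [← pow_add]; congr 1; omega
      rw [h1]; ring
    rw [expand, range_eq_Ico, ← Finset.sum_Ico_consecutive _ (Nat.zero_le N) (by omega),
        ← range_eq_Ico, e1, e2, add_comm]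
  obtain ⟨A', B', h'⟩ := h2
  refine ⟨u^N * v^s * A', B' * v^s, ?_⟩
  have h3 : u^(3*N) = u^N * u^(2*N) := by rw [← pow_add]; congr 1; ring
  rw [h3, h']; ring

lemma cert_ring {R : Type*} [Ring R] {u v : R} (h : Commute u v) (N s : ℕ) :
    ∃ A B : R, u^(3*N) * v^s = A * (u+v)^N + B * (u^N * v^N) := by
  letI : CommRing (Algebra.adjoin ℤ ({u, v} : Set R)) := by
    apply Algebra.adjoinCommRingOfComm
    rintro x (rfl | rfl) y (rfl | rfl)
    · rfl
    · exact h.eq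
    · exact h.symm.eq
    · rfl
  have hu : u ∈ Algebra.adjoin ℤ ({u, v} : Set R) :=
    Algebra.subset_adjoin (Set.mem_insert _ _)
  have hv : v ∈ Algebra.adjoin ℤ ({u, v} : Set R) :=
    Algebra.subset_adjoin (Set.mem_insert_of_mem _ rfl)
  obtain ⟨A, B, hAB⟩ := cert_comm (⟨u, hu⟩ : Algebra.adjoin ℤ ({u, v} : Set R)) ⟨v, hv⟩ N s
  refine ⟨A, B, ?_⟩
  have := congrArg (Subtype.val) hAB
  push_cast at this
  exact this

lemma cert_ring2 {R : Type*} [Ring R] {u v : R} (h : Commute u v) (N s : ℕ) :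
    ∃ A B : R, u^(3*N) * v^s = A * v^N + B * (u^N * (u-v)^N) := by
  letI : CommRing (Algebra.adjoin ℤ ({u, v} : Set R)) := by
    apply Algebra.adjoinCommRingOfComm
    rintro x (rfl | rfl) y (rfl | rfl)
    · rfl
    · exact h.eq
    · exact h.symm.eq
    · rfl
  have hu : u ∈ Algebra.adjoin ℤ ({u, v} : Set R) :=
    Algebra.subset_adjoin (Set.mem_insert _ _)
  have hv : v ∈ Algebra.adjoin ℤ ({u, v} : Set R) :=
    Algebra.subset_adjoin (Set.mem_insert_of_mem _ rfl)
  obtain ⟨A, B, hAB⟩ := cert_comm2 (⟨u, hu⟩ : Algebra.adjoin ℤ ({u, v} : Set R)) ⟨v, hv⟩ N s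
  refine ⟨A, B, ?_⟩
  have := congrArg (Subtype.val) hAB
  push_cast at this
  exact this

lemma key1 (P Q : Module.End ℤ (ℤ → ℤ → ℤ → M)) (hPQ : Commute P Q) (N s : ℕ)
    (h : ℤ → ℤ → ℤ → M) (h1 : ((P+Q)^N) h = 0) (h2 : (P^N) ((Q^N) h) = 0) :
    (P^(3*N)) ((Q^s) h) = 0 := by
  obtain ⟨A, B, hc⟩ := cert_ring hPQ N s
  have e : (P^(3*N)) ((Q^s) h) = (P^(3*N) * Q^s) h := rfl
  rw [e, hc]
  simp [LinearMap.add_apply, Module.End.mul_apply, h1, h2]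

lemma key2 (P Q : Module.End ℤ (ℤ → ℤ → ℤ → M)) (hPQ : Commute P Q) (N s : ℕ)
    (h : ℤ → ℤ → ℤ → M) (h1 : (Q^N) h = 0) (h2 : (P^N) (((P-Q)^N) h) = 0) :
    (P^(3*N)) ((Q^s) h) = 0 := by
  obtain ⟨A, B, hc⟩ := cert_ring2 hPQ N s
  have e : (P^(3*N)) ((Q^s) h) = (P^(3*N) * Q^s) h := rfl
  rw [e, hc]
  simp [LinearMap.add_apply, Module.End.mul_apply, h1, h2]

end DongAux

namespace DongAux

/-! ### The three-variable distributions -/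

variable (a b : ℤ → g) (v : ℤ → V)

/-- `G(p,q,r) = ⁅a p, ⁅b q, v r⁆⁆`. -/
def FG : ℤ → ℤ → ℤ → V := fun p q r => ⁅a p, ⁅b q, v r⁆⁆

/-- `H(p,q,r) = ⁅b q, ⁅a p, v r⁆⁆`. -/
def FH : ℤ → ℤ → ℤ → V := fun p q r => ⁅b q, ⁅a p, v r⁆⁆

lemma op_ab {N : ℕ}
    (h : ∀ m n : ℤ, ∑ k ∈ range (N + 1),
      ((-1 : ℤ) ^ k * (N.choose k : ℤ)) • ⁅a (m + N - k), b (n + k)⁆ = 0) :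
    (((sh1 - sh2 : Module.End ℤ (ℤ → ℤ → ℤ → V)))^N) (FG a b v - FH a b v) = 0 := by
  funext p q r
  show _ = (0:V)
  rw [evalD12]
  set φ : g →+ V := AddMonoidHom.mk' (fun x => ⁅x, v r⁆) (fun x y => add_lie x y (v r)) with hφ
  have key : ∀ k ∈ range (N+1),
      ((-1:ℤ)^k * (N.choose k : ℤ)) • (FG a b v - FH a b v) (p + N - k) (q + k) r
        = φ (((-1:ℤ)^k * (N.choose k : ℤ)) • ⁅a (p + N - k), b (q + k)⁆) := by
    intro k _
    rw [AddMonoidHom.map_zsmul]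
    congr 1
    show FG a b v _ _ r - FH a b v _ _ r = ⁅⁅a (p + N - k), b (q + k)⁆, v r⁆
    rw [lie_lie]
    rfl
  rw [Finset.sum_congr rfl key, ← map_sum, h p q, map_zero]

lemma op_av {N : ℕ}
    (h : ∀ m n : ℤ, ∑ k ∈ range (N + 1),
      ((-1 : ℤ) ^ k * (N.choose k : ℤ)) • ⁅a (m + N - k), v (n + k)⁆ = 0) :
    (((sh1 - sh3 : Module.End ℤ (ℤ → ℤ → ℤ → V)))^N) (FH a b v) = 0 := by
  funext p q r
  show _ = (0:V)
  rw [evalD13]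
  set ψ : V →+ V := AddMonoidHom.mk' (fun w => ⁅b q, w⁆) (lie_add (b q)) with hψ
  have key : ∀ k ∈ range (N+1),
      ((-1:ℤ)^k * (N.choose k : ℤ)) • FH a b v (p + N - k) q (r + k)
        = ψ (((-1:ℤ)^k * (N.choose k : ℤ)) • ⁅a (p + N - k), v (r + k)⁆) := by
    intro k _
    rw [AddMonoidHom.map_zsmul]
    rfl
  rw [Finset.sum_congr rfl key, ← map_sum, h p r, map_zero]

lemma op_bv {N : ℕ}
    (h : ∀ m n : ℤ, ∑ k ∈ range (N + 1),
      ((-1 : ℤ) ^ k * (N.choose k : ℤ)) • ⁅b (m + N - k), v (n + k)⁆ = 0) :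
    (((sh2 - sh3 : Module.End ℤ (ℤ → ℤ → ℤ → V)))^N) (FG a b v) = 0 := by
  funext p q r
  show _ = (0:V)
  rw [evalD23]
  set ψ : V →+ V := AddMonoidHom.mk' (fun w => ⁅a p, w⁆) (lie_add (a p)) with hψ
  have key : ∀ k ∈ range (N+1),
      ((-1:ℤ)^k * (N.choose k : ℤ)) • FG a b v p (q + N - k) (r + k)
        = ψ (((-1:ℤ)^k * (N.choose k : ℤ)) • ⁅b (q + N - k), v (r + k)⁆) := by
    intro k _
    rw [AddMonoidHom.map_zsmul]
    rfl
  rw [Finset.sum_congr rfl key, ← map_sum, h q r, map_zero]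

lemma bridge1 (j : ℕ) (p' q' : ℤ) :
    ⁅nprod a b j p', v q'⁆
      = (((sh1 - sh2 : Module.End ℤ (ℤ → ℤ → ℤ → V)))^j) (FG a b v - FH a b v) 0 p' q' := by
  rw [evalD12]
  set φ : g →+ V := AddMonoidHom.mk' (fun x => ⁅x, v q'⁆) (fun x y => add_lie x y (v q')) with hφ
  have : ⁅nprod a b j p', v q'⁆ = φ (nprod a b j p') := rfl
  rw [this, nprod, map_sum]
  apply Finset.sum_congr rfl
  intro k _
  rw [AddMonoidHom.map_zsmul]
  congr 1
  show ⁅⁅a ((j:ℤ) - k), b (p' + k)⁆, v q'⁆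
    = (FG a b v - FH a b v) ((0:ℤ) + j - k) (p' + k) q'
  rw [show (0:ℤ) + j - k = (j:ℤ) - k from by ring]
  show _ = FG a b v _ _ q' - FH a b v _ _ q'
  rw [lie_lie]
  rfl

lemma bridge2 (j : ℕ) (p' q' : ℤ) :
    ⁅a p', nprod b v j q'⁆
      = (((sh2 - sh3 : Module.End ℤ (ℤ → ℤ → ℤ → V)))^j) (FG a b v) p' 0 q' := by
  rw [evalD23]
  set ψ : V →+ V := AddMonoidHom.mk' (fun w => ⁅a p', w⁆) (lie_add (a p')) with hψ
  have : ⁅a p', nprod b v j q'⁆ = ψ (nprod b v j q') := rfl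
  rw [this, nprod, map_sum]
  apply Finset.sum_congr rfl
  intro k _
  rw [AddMonoidHom.map_zsmul]
  congr 1
  show ⁅a p', ⁅b ((j:ℤ) - k), v (q' + k)⁆⁆ = FG a b v p' ((0:ℤ) + j - k) (q' + k)
  rw [show (0:ℤ) + j - k = (j:ℤ) - k from by ring]
  rfl

end DongAux

open DongAux in
/-- Dong's lemma for modules: if the pairs `(a,b)`, `(a,v)`, `(b,v)` are local, then so are
`(a_{(j)}b, v)` and `(a, b_{(j)}v)` for every `j ∈ ℤ₊`. -/
theorem dong_lemma_for_modules (a b : ℤ → g) (v : ℤ → V)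
    (hab : IsLocal a b) (hav : IsLocal a v) (hbv : IsLocal b v) (j : ℕ) :
    IsLocal (fun m => nprod a b j m) v ∧ IsLocal a (fun m => nprod b v j m) := by
  classical
  obtain ⟨N1, h1⟩ := hab
  obtain ⟨N2, h2⟩ := hav
  obtain ⟨N3, h3⟩ := hbv
  set N : ℕ := max (max N1 N2) N3 with hN
  set X : Module.End ℤ (ℤ → ℤ → ℤ → V) := sh1 - sh2 with hXdef
  set Y : Module.End ℤ (ℤ → ℤ → ℤ → V) := sh2 - sh3 with hYdef
  set C : Module.End ℤ (ℤ → ℤ → ℤ → V) := sh1 - sh3 with hCdef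
  -- commutation relations
  have cXY : Commute X Y :=
    ((comm12 (M := V)).sub_right (comm13 (M := V))).sub_left
      ((Commute.refl (sh2 : Module.End ℤ (ℤ → ℤ → ℤ → V))).sub_right (comm23 (M := V)))
  have cXC : Commute X C :=
    ((Commute.refl (sh1 : Module.End ℤ (ℤ → ℤ → ℤ → V))).sub_right (comm13 (M := V))).sub_left
      ((comm12 (M := V)).symm.sub_right (comm23 (M := V)))
  have cCY : Commute C Y :=
    ((comm12 (M := V)).sub_right (comm13 (M := V))).sub_left
      ((comm23 (M := V)).symm.sub_right (Commute.refl (sh3 : Module.End ℤ (ℤ → ℤ → ℤ → V))))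
  -- the locality hypotheses, in operator form, raised to the common order N
  have fab : (X^N) (FG a b v - FH a b v) = 0 :=
    raise X _ (op_ab a b v h1) ((le_max_left N1 N2).trans (le_max_left _ N3))
  have fav : (C^N) (FH a b v) = 0 :=
    raise C _ (op_av a b v h2) ((le_max_right N1 N2).trans (le_max_left _ N3))
  have fbv : (Y^N) (FG a b v) = 0 :=
    raise Y _ (op_bv a b v h3) (le_max_right _ N3)
  have hGH : (X^N) (FG a b v) = (X^N) (FH a b v) :=
    sub_eq_zero.mp (by rw [← map_sub]; exact fab)
  have derived1 : (Y^N) ((X^N) (FH a b v)) = 0 := by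
    rw [← hGH]
    calc (Y^N) ((X^N) (FG a b v)) = (Y^N * X^N) (FG a b v) := rfl
      _ = (X^N * Y^N) (FG a b v) := by rw [(cXY.symm.pow_pow N N).eq]
      _ = (X^N) ((Y^N) (FG a b v)) := rfl
      _ = 0 := by rw [fbv, map_zero]
  have derived2 : (C^N) ((X^N) (FG a b v)) = 0 := by
    rw [hGH]
    calc (C^N) ((X^N) (FH a b v)) = (C^N * X^N) (FH a b v) := rfl
      _ = (X^N * C^N) (FH a b v) := by rw [(cXC.symm.pow_pow N N).eq]
      _ = (X^N) ((C^N) (FH a b v)) := rfl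
      _ = 0 := by rw [fav, map_zero]
  constructor
  · -- the pair (a_{(j)}b, v)
    refine ⟨3*N, fun m n => ?_⟩
    have main1 : (Y^(3*N)) ((X^j) (FG a b v - FH a b v)) = 0 := by
      rw [map_sub, map_sub]
      have t1 : (Y^(3*N)) ((X^j) (FG a b v)) = 0 := by
        calc (Y^(3*N)) ((X^j) (FG a b v)) = (Y^(3*N) * X^j) (FG a b v) := rfl
          _ = (X^j * Y^(3*N)) (FG a b v) := by rw [(cXY.symm.pow_pow _ _).eq]
          _ = (X^j) ((Y^(3*N)) (FG a b v)) := rfl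
          _ = 0 := by rw [raise Y _ fbv (by omega), map_zero]
      have t2 : (Y^(3*N)) ((X^j) (FH a b v)) = 0 := by
        apply key1 Y X cXY.symm N j
        · rw [show Y + X = C from by rw [hYdef, hXdef, hCdef]; abel]
          exact fav
        · exact derived1
      rw [t1, t2, sub_zero]
    calc ∑ k ∈ range (3*N + 1), ((-1 : ℤ) ^ k * ((3*N).choose k : ℤ)) •
            ⁅(fun m => nprod a b j m) (m + (3*N : ℕ) - k), v (n + k)⁆
        = ∑ k ∈ range (3*N + 1), ((-1 : ℤ) ^ k * ((3*N).choose k : ℤ)) •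
            ((X^j) (FG a b v - FH a b v)) 0 (m + (3*N : ℕ) - k) (n + k) := by
          apply Finset.sum_congr rfl
          intro k _
          rw [show ⁅(fun m => nprod a b j m) (m + ((3*N : ℕ) : ℤ) - k), v (n + k)⁆
              = ⁅nprod a b j (m + ((3*N : ℕ) : ℤ) - k), v (n + k)⁆ from rfl,
            bridge1 a b v j]
      _ = (Y^(3*N)) ((X^j) (FG a b v - FH a b v)) 0 m n := (evalD23 (3*N) _ 0 m n).symm
      _ = 0 := by rw [main1]; rfl
  · -- the pair (a, b_{(j)}v)
    refine ⟨3*N, fun m n => ?_⟩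
    have main2 : (C^(3*N)) ((Y^j) (FG a b v)) = 0 := by
      apply key2 C Y cCY N j
      · exact fbv
      · rw [show C - Y = X from by rw [hYdef, hXdef, hCdef]; abel]
        exact derived2
    calc ∑ k ∈ range (3*N + 1), ((-1 : ℤ) ^ k * ((3*N).choose k : ℤ)) •
            ⁅a (m + (3*N : ℕ) - k), (fun m => nprod b v j m) (n + k)⁆
        = ∑ k ∈ range (3*N + 1), ((-1 : ℤ) ^ k * ((3*N).choose k : ℤ)) •
            ((Y^j) (FG a b v)) (m + (3*N : ℕ) - k) 0 (n + k) := by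
          apply Finset.sum_congr rfl
          intro k _
          rw [show ⁅a (m + ((3*N : ℕ) : ℤ) - k), (fun m => nprod b v j m) (n + k)⁆
              = ⁅a (m + ((3*N : ℕ) : ℤ) - k), nprod b v j (n + k)⁆ from rfl,
            bridge2 a b v j]
      _ = (C^(3*N)) ((Y^j) (FG a b v)) m 0 n := (evalD13 (3*N) _ m 0 n).symm
      _ = 0 := by rw [main2]; rfl
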